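/- arXiv:1811.12527 — 3 statements merged into one kernel-verified Lean document; each statement's English description precedes it below -/
import Mathlib

section
/- Suppose there exist u ∈ U and v ∈ V such that no coordinate c satisfies u[c] = v[c] = w[c] = 1. Then in the diameter-construction graph G(U,V,w,a), every walk between u^0 and v^a has length at least 6a+1; in particular the diameter of G(U,V,w,a) is at least 6a+1. -/
/-!
Give every vertex a potential that never grows by more than one along an edge, is `0` at `u^0`
and `6a+1` at `v^a`; a walk between them then has at least `6a+1` edges. On the named vertices
the potential is (a lower bound for) the distance from `u^0`, and it is `2a+1` at `c_V` only when
`u[c] = w[c] = 1`; since then `v[c] = 0`, the vertex `v^0` sits at `5a+1`. On the internal vertices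
of an added path the potential is interpolated from the endpoints, which keeps it 1-Lipschitz as
soon as the endpoint values differ by at most the length of the path.
-/

namespace DiamConstr

variable {B P : Type*}

/-- Vertices of a graph assembled from base vertices `B` and, for each path request
`p : P` of length `L p`, the `L p - 1` internal vertices of the path. -/
abbrev Vert (B P : Type*) (L : P → ℕ) : Type _ := B ⊕ (Σ p : P, Fin (L p - 1))

/-- `pos e0 e1 L p i z` : `z` is the `i`-th vertex along the path `p`
(whose endpoints are `e0 p` and `e1 p` and whose length is `L p`). -/
def pos (e0 e1 : P → B) (L : P → ℕ) (p : P) (i : ℕ) (z : Vert B P L) : Prop :=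
  (i = 0 ∧ z = Sum.inl (e0 p)) ∨ (i = L p ∧ z = Sum.inl (e1 p)) ∨
    (∃ h : i - 1 < L p - 1, 0 < i ∧ i < L p ∧ z = Sum.inr ⟨p, ⟨i - 1, h⟩⟩)

/-- The graph obtained from the base vertex set `B` by adding, for each `p : P`, an
internally vertex-disjoint path of length `L p` between the vertices `e0 p` and
`e1 p` (for `L p = 1` this is just an edge). -/
def pathGraph (e0 e1 : P → B) (L : P → ℕ) : SimpleGraph (Vert B P L) where
  Adj x y := x ≠ y ∧ ∃ p i, i < L p ∧
    ((pos e0 e1 L p i x ∧ pos e0 e1 L p (i + 1) y) ∨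
     (pos e0 e1 L p i y ∧ pos e0 e1 L p (i + 1) x))
  symm := by
    refine ⟨?_⟩
    rintro x y ⟨hne, p, i, hi, h⟩
    exact ⟨hne.symm, p, i, hi, h.symm⟩
  loopless := ⟨fun x h => h.1 rfl⟩

/-- Base (named) vertices of the diameter-construction graph `G(U,V,w,a)`:
coordinate vertices `c_U`, `c_V`, path endpoints `u^0`, `u^a`, `v^0`, `v^a`,
and the two extra vertices `x` and `y`. -/
inductive Base (ℓ : ℕ) (U V : Set (Fin ℓ → Bool)) : Type
  | cU (c : Fin ℓ)
  | cV (c : Fin ℓ)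
  | u0 (u : U)
  | ua (u : U)
  | v0 (v : V)
  | va (v : V)
  | x
  | y

/-- Path requests of the diameter-construction graph `G(U,V,w,a)`. -/
inductive Pth (ℓ : ℕ) (U V : Set (Fin ℓ → Bool)) (w : Fin ℓ → Bool) : Type
  | upath (u : U)                                      -- u^0 … u^a, length a
  | vpath (v : V)                                      -- v^0 … v^a, length a
  | uc (u : U) (c : Fin ℓ) (h : u.1 c = true)          -- u^a — c_U, length a
  | vc (v : V) (c : Fin ℓ) (h : v.1 c = true)          -- c_V — v^0, length a
  | wc (c : Fin ℓ) (h : w c = true)                    -- edge c_U — c_V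
  | xu (u : U)                                         -- x — u^a, length a
  | yv (v : V)                                         -- y — v^0, length a

variable {ℓ : ℕ} {U V : Set (Fin ℓ → Bool)} {w : Fin ℓ → Bool}

/-- First endpoint of each path request. -/
def e0 : Pth ℓ U V w → Base ℓ U V
  | .upath u => .u0 u
  | .vpath v => .v0 v
  | .uc u _ _ => .ua u
  | .vc _ c _ => .cV c
  | .wc c _ => .cU c
  | .xu _ => .x
  | .yv _ => .y

/-- Second endpoint of each path request. -/
def e1 : Pth ℓ U V w → Base ℓ U V
  | .upath u => .ua u
  | .vpath v => .va v
  | .uc _ c _ => .cU c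
  | .vc v _ _ => .v0 v
  | .wc c _ => .cV c
  | .xu u => .ua u
  | .yv v => .v0 v

/-- Length of each path request: the `c_U — c_V` connections are single edges,
all other paths have length `a`. -/
def len (a : ℕ) : Pth ℓ U V w → ℕ
  | .wc _ _ => 1
  | _ => a

/-- The diameter-construction graph `G(U,V,w,a)`. -/
def G (a ℓ : ℕ) (U V : Set (Fin ℓ → Bool)) (w : Fin ℓ → Bool) :
    SimpleGraph (Vert (Base ℓ U V) (Pth ℓ U V w) (len a)) :=
  pathGraph e0 e1 (len a)

end DiamConstr

theorem SimpleGraph.Walk.le_add_length {V : Type*} {G : SimpleGraph V} (φ : V → ℕ)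
    (hφ : ∀ ⦃x y⦄, G.Adj x y → φ y ≤ φ x + 1) {s t : V} (p : G.Walk s t) :
    φ t ≤ φ s + p.length := by
  induction p with
  | nil => simp
  | cons h _ ih =>
    have := hφ h
    rw [SimpleGraph.Walk.length_cons]
    omega

namespace DiamConstr

section PathGraph

variable {B P : Type*} {e0 e1 : P → B} {L : P → ℕ}

def interpolate (e0 e1 : P → B) (L : P → ℕ) (f : B → ℕ) : Vert B P L → ℕ
  | .inl b => f b
  | .inr ⟨p, j⟩ => min (f (e0 p) + (j + 1)) (f (e1 p) + (L p - (j + 1)))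

variable {f : B → ℕ}

theorem interpolate_of_pos {p : P} (hp₀ : f (e0 p) ≤ f (e1 p) + L p)
    (hp₁ : f (e1 p) ≤ f (e0 p) + L p) {i : ℕ} {z : Vert B P L} (hz : pos e0 e1 L p i z) :
    interpolate e0 e1 L f z = min (f (e0 p) + i) (f (e1 p) + (L p - i)) := by
  rcases hz with ⟨rfl, rfl⟩ | ⟨rfl, rfl⟩ | ⟨_, hi₀, hi, rfl⟩
  · simp only [interpolate]
    omega
  · simp only [interpolate]
    omega
  · simp only [interpolate]
    congr 2 <;> omega

theorem interpolate_le_of_adj (hf₀ : ∀ p, f (e0 p) ≤ f (e1 p) + L p)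
    (hf₁ : ∀ p, f (e1 p) ≤ f (e0 p) + L p) {x y : Vert B P L}
    (hxy : (pathGraph e0 e1 L).Adj x y) :
    interpolate e0 e1 L f y ≤ interpolate e0 e1 L f x + 1 := by
  obtain ⟨-, p, i, -, ⟨hx, hy⟩ | ⟨hy, hx⟩⟩ := hxy
  all_goals
    rw [interpolate_of_pos (hf₀ p) (hf₁ p) hx, interpolate_of_pos (hf₀ p) (hf₁ p) hy]
    omega

theorem pathGraph_le_add_length (hf₀ : ∀ p, f (e0 p) ≤ f (e1 p) + L p)
    (hf₁ : ∀ p, f (e1 p) ≤ f (e0 p) + L p) {s t : B}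
    (q : (pathGraph e0 e1 L).Walk (.inl s) (.inl t)) :
    f t ≤ f s + q.length :=
  q.le_add_length (interpolate e0 e1 L f) fun _ _ => interpolate_le_of_adj hf₀ hf₁

end PathGraph

section NoCase

variable {ℓ : ℕ} {U V : Set (Fin ℓ → Bool)} {w : Fin ℓ → Bool}

def noCasePotential (a : ℕ) (u v w : Fin ℓ → Bool) : Base ℓ U V → ℕ
  | .u0 u' => if u'.1 = u then 0 else 4 * a
  | .ua u' => if u'.1 = u then a else 3 * a
  | .x => 2 * a
  | .cU c => if u c = true then 2 * a else 4 * a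
  | .cV c => if u c = true ∧ w c = true then 2 * a + 1 else 4 * a + 1
  | .v0 v' => if v'.1 = v then 5 * a + 1 else 3 * a + 1
  | .va v' => if v'.1 = v then 6 * a + 1 else 4 * a + 1
  | .y => 4 * a + 1

variable {a : ℕ} {u v : Fin ℓ → Bool}

theorem noCasePotential_sub_le (hno : ∀ c, ¬(u c = true ∧ v c = true ∧ w c = true))
    (p : Pth ℓ U V w) :
    noCasePotential a u v w (e0 p) ≤ noCasePotential a u v w (e1 p) + len a p ∧
      noCasePotential a u v w (e1 p) ≤ noCasePotential a u v w (e0 p) + len a p := by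
  cases p with
  | uc u' c hc =>
    simp only [e0, e1, len, noCasePotential]
    by_cases hu' : u'.1 = u
    · rw [if_pos hu', if_pos (hu' ▸ hc)]
      omega
    · rw [if_neg hu']
      split <;> omega
  | vc v' c hc =>
    simp only [e0, e1, len, noCasePotential]
    by_cases huw : u c = true ∧ w c = true
    · have hv' : v'.1 ≠ v := fun hv' => hno c ⟨huw.1, hv' ▸ hc, huw.2⟩
      rw [if_pos huw, if_neg hv']
      omega
    · rw [if_neg huw]
      split <;> omega
  | wc c hc =>
    simp only [e0, e1, len, noCasePotential, hc, and_true]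
    split <;> omega
  | _ =>
    simp only [e0, e1, len, noCasePotential]
    split <;> omega

end NoCase

end DiamConstr

open DiamConstr in
theorem diameter_construction_no_case_general
    (a ℓ : ℕ)
    (U V : Set (Fin ℓ → Bool)) (w : Fin ℓ → Bool)
    (u v : Fin ℓ → Bool) (hu : u ∈ U) (hv : v ∈ V)
    (hno : ∀ c : Fin ℓ, ¬(u c = true ∧ v c = true ∧ w c = true)) :
    ∀ p : (G a ℓ U V w).Walk (Sum.inl (Base.u0 ⟨u, hu⟩)) (Sum.inl (Base.va ⟨v, hv⟩)),
      6 * a + 1 ≤ p.length := by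
  intro p
  have h := pathGraph_le_add_length (f := noCasePotential a u v w)
    (fun q => (noCasePotential_sub_le hno q).1) (fun q => (noCasePotential_sub_le hno q).2) p
  simp only [noCasePotential, if_true, zero_add] at h
  exact h

open DiamConstr in
theorem diameter_construction_no_case
    (a ℓ : ℕ) (ha : 0 < a) (hℓ : 0 < ℓ)
    (U V : Set (Fin ℓ → Bool)) (hUfin : U.Finite) (hVfin : V.Finite)
    (hU : U.Nonempty) (hV : V.Nonempty) (w : Fin ℓ → Bool)
    (hUone : ∀ u ∈ U, ∃ c, u c = true) (hVone : ∀ v ∈ V, ∃ c, v c = true)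
    (hUcov : ∀ c : Fin ℓ, ∃ u ∈ U, u c = true)
    (hVcov : ∀ c : Fin ℓ, ∃ v ∈ V, v c = true)
    (u v : Fin ℓ → Bool) (hu : u ∈ U) (hv : v ∈ V)
    (hno : ∀ c : Fin ℓ, ¬(u c = true ∧ v c = true ∧ w c = true)) :
    ∀ p : (G a ℓ U V w).Walk (Sum.inl (Base.u0 ⟨u, hu⟩)) (Sum.inl (Base.va ⟨v, hv⟩)),
      6 * a + 1 ≤ p.length :=
  diameter_construction_no_case_general a ℓ U V w u v hu hv hno
end

section
/- Suppose there exist u ∈ U and v ∈ V such that no coordinate c satisfies u[c] = v[c] = w[c] = 1. Then in the eccentricity-construction graph G_ecc, every walk between u^a and v^a has length at least 5a+1; in particular the eccentricity of u^a is at least 5a+1. -/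
/-!
Eccentricities lower-bound construction (Theorem 3.3, "no" case): if some `u ∈ U`
and `v ∈ V` share no coordinate `c` with `u[c] = v[c] = w[c] = 1`, then in the
eccentricity-construction graph `G_ecc` every walk between `u^a` and `v^a` has
length at least `5a+1` (so the eccentricity of `u^a` is at least `5a+1`).
-/

namespace EccConstr

variable {B P : Type*}

/-- Vertices of a graph assembled from base vertices `B` and, for each path request
`p : P` of length `L p`, the `L p - 1` internal vertices of the path. -/
abbrev Vert (B P : Type*) (L : P → ℕ) : Type _ := B ⊕ (Σ p : P, Fin (L p - 1))

/-- `pos e0 e1 L p i z` : `z` is the `i`-th vertex along the path `p`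
(whose endpoints are `e0 p` and `e1 p` and whose length is `L p`). -/
def pos (e0 e1 : P → B) (L : P → ℕ) (p : P) (i : ℕ) (z : Vert B P L) : Prop :=
  (i = 0 ∧ z = Sum.inl (e0 p)) ∨ (i = L p ∧ z = Sum.inl (e1 p)) ∨
    (∃ h : i - 1 < L p - 1, 0 < i ∧ i < L p ∧ z = Sum.inr ⟨p, ⟨i - 1, h⟩⟩)

/-- The graph obtained from the base vertex set `B` by adding, for each `p : P`, an
internally vertex-disjoint path of length `L p` between the vertices `e0 p` and
`e1 p` (for `L p = 1` this is just an edge). -/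
def pathGraph (e0 e1 : P → B) (L : P → ℕ) : SimpleGraph (Vert B P L) where
  Adj x y := x ≠ y ∧ ∃ p i, i < L p ∧
    ((pos e0 e1 L p i x ∧ pos e0 e1 L p (i + 1) y) ∨
     (pos e0 e1 L p i y ∧ pos e0 e1 L p (i + 1) x))
  symm := ⟨by
    rintro x y ⟨hne, p, i, hi, h⟩
    exact ⟨hne.symm, p, i, hi, h.symm⟩⟩
  loopless := ⟨fun x h => h.1 rfl⟩

/-- Base (named) vertices of the eccentricity-construction graph `G_ecc`. -/
inductive Base (ℓ : ℕ) (U V : Set (Fin ℓ → Bool)) : Type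
  | cU (c : Fin ℓ)
  | cV (c : Fin ℓ)
  | u0 (u : U)
  | ua (u : U)
  | v0 (v : V)
  | va (v : V)
  | x

/-- Path requests of the eccentricity-construction graph `G_ecc`. -/
inductive Pth (ℓ : ℕ) (U V : Set (Fin ℓ → Bool)) (w : Fin ℓ → Bool) : Type
  | upath (u : U)                                      -- u^0 … u^a, length a
  | vpath (v : V)                                      -- v^0 … v^a, length a
  | uc (u : U) (c : Fin ℓ) (h : u.1 c = true)          -- u^a — c_U, length a
  | vc (v : V) (c : Fin ℓ) (h : v.1 c = true)          -- c_V — v^0, length a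
  | wc (c : Fin ℓ) (h : w c = true)                    -- edge c_U — c_V
  | xu (u : U)                                         -- edge x — u^0

variable {ℓ : ℕ} {U V : Set (Fin ℓ → Bool)} {w : Fin ℓ → Bool}

/-- First endpoint of each path request. -/
def e0 : Pth ℓ U V w → Base ℓ U V
  | .upath u => .u0 u
  | .vpath v => .v0 v
  | .uc u _ _ => .ua u
  | .vc _ c _ => .cV c
  | .wc c _ => .cU c
  | .xu _ => .x

/-- Second endpoint of each path request. -/
def e1 : Pth ℓ U V w → Base ℓ U V
  | .upath u => .ua u
  | .vpath v => .va v
  | .uc _ c _ => .cU c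
  | .vc v _ _ => .v0 v
  | .wc c _ => .cV c
  | .xu u => .u0 u

/-- Length of each path request: the `c_U — c_V` connections and the `x — u^0`
connections are single edges, all other paths have length `a`. -/
def len (a : ℕ) : Pth ℓ U V w → ℕ
  | .wc _ _ => 1
  | .xu _ => 1
  | _ => a

/-- The eccentricity-construction graph `G_ecc`. -/
def Gecc (a ℓ : ℕ) (U V : Set (Fin ℓ → Bool)) (w : Fin ℓ → Bool) :
    SimpleGraph (Vert (Base ℓ U V) (Pth ℓ U V w) (len a)) :=
  pathGraph e0 e1 (len a)

end EccConstr

/-!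
Let `φ` be a lower bound for the distance from `u^a`, given by hand on the named vertices.
Along an added path of length `k` from `X` to `Y`, give the vertex at position `i` the value
`min (φ X + i) (φ Y + (k - i))`. If `φ X` and `φ Y` differ by at most `k` for every added path,
this extension changes by at most `1` along every edge, so `φ y ≤ φ x + |p|` for every walk `p`
from `x` to `y`. The only short way from `u^a` to the `V`-side runs through an edge `c_U c_V`
with `u[c] = w[c] = 1` into some `v^0` with `v[c] = 1`; when there is no such `c` for `v`, the
bound reaches `φ (v^a) = 5a + 1`.
-/

namespace EccConstr

section PathGraph

variable {B P : Type*} (e0 e1 : P → B) (L : P → ℕ)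

def LipschitzAlongPaths (f : B → ℕ) : Prop :=
  ∀ p, f (e0 p) ≤ f (e1 p) + L p ∧ f (e1 p) ≤ f (e0 p) + L p

def pathPotential (f : B → ℕ) : Vert B P L → ℕ
  | .inl b => f b
  | .inr ⟨p, j⟩ => min (f (e0 p) + (j.1 + 1)) (f (e1 p) + (L p - (j.1 + 1)))

variable {e0 e1 L} {f : B → ℕ}

lemma pathPotential_of_pos (hf : LipschitzAlongPaths e0 e1 L f) {p : P} {i : ℕ}
    {z : Vert B P L} (hz : pos e0 e1 L p i z) :
    pathPotential e0 e1 L f z = min (f (e0 p) + i) (f (e1 p) + (L p - i)) := by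
  obtain ⟨h0, h1⟩ := hf p
  rcases hz with ⟨rfl, rfl⟩ | ⟨rfl, rfl⟩ | ⟨_, _, _, rfl⟩
  · simp only [pathPotential]; omega
  · simp only [pathPotential]; omega
  · simp only [pathPotential]; congr 2 <;> omega

lemma pathPotential_le_of_adj (hf : LipschitzAlongPaths e0 e1 L f) {x y : Vert B P L}
    (hxy : (pathGraph e0 e1 L).Adj x y) :
    pathPotential e0 e1 L f y ≤ pathPotential e0 e1 L f x + 1 := by
  obtain ⟨-, p, i, -, h | h⟩ := hxy <;>
    rw [pathPotential_of_pos hf h.1, pathPotential_of_pos hf h.2] <;> omega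

lemma pathPotential_le_add_length (hf : LipschitzAlongPaths e0 e1 L f) {x y : Vert B P L}
    (q : (pathGraph e0 e1 L).Walk x y) :
    pathPotential e0 e1 L f y ≤ pathPotential e0 e1 L f x + q.length := by
  induction q with
  | nil => simp
  | cons hxy _ ih =>
    rw [SimpleGraph.Walk.length_cons]
    have := pathPotential_le_of_adj hf hxy
    omega

lemma LipschitzAlongPaths.le_add_length (hf : LipschitzAlongPaths e0 e1 L f) {b b' : B}
    (q : (pathGraph e0 e1 L).Walk (.inl b) (.inl b')) :
    f b' ≤ f b + q.length :=
  pathPotential_le_add_length hf q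

end PathGraph

section Ecc

variable {ℓ : ℕ} {U V : Set (Fin ℓ → Bool)}

/-- A lower bound for the distance from `u^a` to the named vertices of `G_ecc`. -/
def distLowerBound (a : ℕ) (u w : Fin ℓ → Bool) : Base ℓ U V → ℕ
  | .ua u' => if u'.1 = u then 0 else 2 * a
  | .u0 u' => if u'.1 = u then a else min (a + 2) (3 * a)
  | .x => a + 1
  | .cU c => if u c = true then a else 3 * a
  | .cV c => if u c = true ∧ w c = true then a + 1 else 3 * a + 1
  | .v0 v' => if ∃ c, u c = true ∧ v'.1 c = true ∧ w c = true then 2 * a + 1 else 4 * a + 1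
  | .va v' => if ∃ c, u c = true ∧ v'.1 c = true ∧ w c = true then 3 * a + 1 else 5 * a + 1

lemma lipschitzAlongPaths_distLowerBound (a : ℕ) (u w : Fin ℓ → Bool) :
    LipschitzAlongPaths (e0 (w := w)) e1 (len a) (distLowerBound (U := U) (V := V) a u w) := by
  intro p
  cases p with
  | uc u' c hc =>
    simp only [e0, e1, len, distLowerBound]
    split_ifs with hu hc' <;> first | omega | exact absurd (hu ▸ hc) hc'
  | vc v' c hc =>
    simp only [e0, e1, len, distLowerBound]
    split_ifs with huw hv <;> first | omega | exact absurd ⟨c, huw.1, hc, huw.2⟩ hv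
  | wc c hw =>
    simp only [e0, e1, len, distLowerBound, hw, and_true]
    split_ifs <;> omega
  | _ =>
    simp only [e0, e1, len, distLowerBound]
    split_ifs <;> omega

end Ecc

end EccConstr

open EccConstr in
theorem eccentricity_construction_no_case_general
    (a ℓ : ℕ)
    (U V : Set (Fin ℓ → Bool)) (w : Fin ℓ → Bool)
    (u v : Fin ℓ → Bool) (hu : u ∈ U) (hv : v ∈ V)
    (hno : ∀ c : Fin ℓ, ¬(u c = true ∧ v c = true ∧ w c = true)) :
    ∀ p : (Gecc a ℓ U V w).Walk (Sum.inl (Base.ua ⟨u, hu⟩)) (Sum.inl (Base.va ⟨v, hv⟩)),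
      5 * a + 1 ≤ p.length := by
  intro p
  have h := (lipschitzAlongPaths_distLowerBound a u w).le_add_length p
  simp only [distLowerBound, if_true, if_neg (not_exists.mpr hno), zero_add] at h
  exact h

open EccConstr in
theorem eccentricity_construction_no_case
    (a ℓ : ℕ) (ha : 0 < a) (hℓ : 0 < ℓ)
    (U V : Set (Fin ℓ → Bool)) (hUfin : U.Finite) (hVfin : V.Finite)
    (hU : U.Nonempty) (hV : V.Nonempty) (w : Fin ℓ → Bool)
    (hUone : ∀ u ∈ U, ∃ c, u c = true) (hVone : ∀ v ∈ V, ∃ c, v c = true)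
    (hUcov : ∀ c : Fin ℓ, ∃ u ∈ U, u c = true)
    (hVcov : ∀ c : Fin ℓ, ∃ v ∈ V, v c = true)
    (u v : Fin ℓ → Bool) (hu : u ∈ U) (hv : v ∈ V)
    (hno : ∀ c : Fin ℓ, ¬(u c = true ∧ v c = true ∧ w c = true)) :
    ∀ p : (Gecc a ℓ U V w).Walk (Sum.inl (Base.ua ⟨u, hu⟩)) (Sum.inl (Base.va ⟨v, hv⟩)),
      5 * a + 1 ≤ p.length :=
  eccentricity_construction_no_case_general a ℓ U V w u v hu hv hno
end

section
/- Suppose there exists u ∈ U such that no coordinate c satisfies u[c] = v[c] = 1. Then in the 2-OV graph H(U,v,a), d(s, u_left^0) = 4a and d(u_left^0, u_right^0) = 8a; in particular the eccentricity of s is at least 4a and the diameter of H(U,v,a) is at least 8a. -/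
/-!
2-OV graph `H(U,v,a)` (Theorem 3.4, "no" case): if some `u ∈ U` shares no
coordinate `c` with `u[c] = v[c] = 1`, then `d(s, u_left^0) = 4a` and
`d(u_left^0, u_right^0) = 8a`; in particular the eccentricity of `s` is at least
`4a` and the diameter of `H(U,v,a)` is at least `8a`.
-/

namespace OVConstr

variable {B P : Type*}

/-- Vertices of a graph assembled from base vertices `B` and, for each path request
`p : P` of length `L p`, the `L p - 1` internal vertices of the path. -/
abbrev Vert (B P : Type*) (L : P → ℕ) : Type _ := B ⊕ (Σ p : P, Fin (L p - 1))

/-- `pos e0 e1 L p i z` : `z` is the `i`-th vertex along the path `p`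
(whose endpoints are `e0 p` and `e1 p` and whose length is `L p`). -/
def pos (e0 e1 : P → B) (L : P → ℕ) (p : P) (i : ℕ) (z : Vert B P L) : Prop :=
  (i = 0 ∧ z = Sum.inl (e0 p)) ∨ (i = L p ∧ z = Sum.inl (e1 p)) ∨
    (∃ h : i - 1 < L p - 1, 0 < i ∧ i < L p ∧ z = Sum.inr ⟨p, ⟨i - 1, h⟩⟩)

/-- The graph obtained from the base vertex set `B` by adding, for each `p : P`, an
internally vertex-disjoint path of length `L p` between the vertices `e0 p` and
`e1 p` (for `L p = 1` this is just an edge). -/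
def pathGraph (e0 e1 : P → B) (L : P → ℕ) : SimpleGraph (Vert B P L) where
  Adj x y := x ≠ y ∧ ∃ p i, i < L p ∧
    ((pos e0 e1 L p i x ∧ pos e0 e1 L p (i + 1) y) ∨
     (pos e0 e1 L p i y ∧ pos e0 e1 L p (i + 1) x))
  symm := ⟨by
    rintro x y ⟨hne, p, i, hi, h⟩
    exact ⟨hne.symm, p, i, hi, h.symm⟩⟩
  loopless := ⟨fun x h => h.1 rfl⟩

/-- Base (named) vertices of the 2-OV graph `H(U,v,a)`. -/
inductive Base (ℓ : ℕ) (U : Set (Fin ℓ → Bool)) : Type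
  | s
  | cL (c : Fin ℓ)
  | cR (c : Fin ℓ)
  | uL0 (u : U)
  | uLa (u : U)
  | uR0 (u : U)
  | uRa (u : U)

/-- Path requests of the 2-OV graph `H(U,v,a)`. -/
inductive Pth (ℓ : ℕ) (U : Set (Fin ℓ → Bool)) (v : Fin ℓ → Bool) : Type
  | scL (c : Fin ℓ)                                    -- s — c_left, length 2a
  | scR (c : Fin ℓ)                                    -- s — c_right, length 2a
  | uLpath (u : U)                                     -- u_left^0 … u_left^a, length a
  | uRpath (u : U)                                     -- u_right^0 … u_right^a, length a
  | ucL (u : U) (c : Fin ℓ) (h : u.1 c = true)         -- u_left^a — c_left, length a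
  | ucR (u : U) (c : Fin ℓ) (h : u.1 c = true)         -- u_right^a — c_right, length a
  | vcL (c : Fin ℓ) (h : v c = true)                   -- edge s — c_left
  | vcR (c : Fin ℓ) (h : v c = true)                   -- edge s — c_right

variable {ℓ : ℕ} {U : Set (Fin ℓ → Bool)} {v : Fin ℓ → Bool}

/-- First endpoint of each path request. -/
def e0 : Pth ℓ U v → Base ℓ U
  | .scL _ => .s
  | .scR _ => .s
  | .uLpath u => .uL0 u
  | .uRpath u => .uR0 u
  | .ucL u _ _ => .uLa u
  | .ucR u _ _ => .uRa u
  | .vcL _ _ => .s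
  | .vcR _ _ => .s

/-- Second endpoint of each path request. -/
def e1 : Pth ℓ U v → Base ℓ U
  | .scL c => .cL c
  | .scR c => .cR c
  | .uLpath u => .uLa u
  | .uRpath u => .uRa u
  | .ucL _ c _ => .cL c
  | .ucR _ c _ => .cR c
  | .vcL c _ => .cL c
  | .vcR c _ => .cR c

/-- Length of each path request: the `s — c_left`/`s — c_right` paths have length
`2a`, the `v`-edges have length `1`, all other paths have length `a`. -/
def len (a : ℕ) : Pth ℓ U v → ℕ
  | .scL _ => 2 * a
  | .scR _ => 2 * a
  | .vcL _ _ => 1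
  | .vcR _ _ => 1
  | _ => a

/-- The 2-OV graph `H(U,v,a)`. -/
def H (a ℓ : ℕ) (U : Set (Fin ℓ → Bool)) (v : Fin ℓ → Bool) :
    SimpleGraph (Vert (Base ℓ U) (Pth ℓ U v) (len a)) :=
  pathGraph e0 e1 (len a)

/-- The eccentricity (in `ℕ∞`) of a vertex `z`: the supremum of the distances from
`z` to all vertices. -/
noncomputable def ecc (a ℓ : ℕ) (U : Set (Fin ℓ → Bool)) (v : Fin ℓ → Bool)
    (z : Vert (Base ℓ U) (Pth ℓ U v) (len a)) : ℕ∞ :=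
  ⨆ y, (H a ℓ U v).edist z y

end OVConstr

/-!
Label every vertex by its distance from `s`, with a minus sign on the left half and a plus
sign on the right half. The label changes by at most one along each edge (the two halves meet
only at `s`, labelled `0`), so differences of labels bound distances from below. If `u` shares
no coordinate with `v`, every `c_left` adjacent (by a path) to `u_left^a` has `v[c] = 0` and
lies at distance `2a` from `s`, so `u_left^0` and `u_right^0` are labelled `-4a` and `4a`. The
route `s — c_left — u_left^a — u_left^0` through a coordinate with `u[c] = 1` has length `4a`.
-/

namespace SimpleGraph

variable {V : Type*} {G : SimpleGraph V}

theorem Walk.sub_le_length {φ : V → ℤ} (hφ : ∀ x y, G.Adj x y → φ y ≤ φ x + 1)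
    {x y : V} (w : G.Walk x y) : φ y - φ x ≤ w.length := by
  induction w with
  | nil => simp
  | cons h w ih =>
    have := hφ _ _ h
    push_cast [Walk.length_cons]
    omega

theorem natCast_le_edist_of_sub_le {φ : V → ℤ} (hφ : ∀ x y, G.Adj x y → φ y ≤ φ x + 1)
    {x y : V} {n : ℕ} (h : (n : ℤ) ≤ φ y - φ x) : (n : ℕ∞) ≤ G.edist x y := by
  by_cases hr : G.Reachable x y
  · obtain ⟨w, hw⟩ := hr.exists_walk_length_eq_edist
    have := w.sub_le_length hφ
    rw [← hw]
    exact_mod_cast (by omega : n ≤ w.length)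
  · simp [edist_eq_top_of_not_reachable hr]

end SimpleGraph

namespace OVConstr

open SimpleGraph

section PathGraph

variable {B P : Type*} {e0 e1 : P → B} {L : P → ℕ} {p : P} {i : ℕ}

theorem exists_pos (hi : i ≤ L p) : ∃ z, pos e0 e1 L p i z := by
  rcases Nat.eq_zero_or_pos i with rfl | h0
  · exact ⟨Sum.inl (e0 p), Or.inl ⟨rfl, rfl⟩⟩
  rcases hi.lt_or_eq with hlt | rfl
  · exact ⟨Sum.inr ⟨p, ⟨i - 1, by omega⟩⟩, Or.inr (Or.inr ⟨by omega, h0, hlt, rfl⟩)⟩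
  · exact ⟨Sum.inl (e1 p), Or.inr (Or.inl ⟨rfl, rfl⟩)⟩

theorem edist_le_one_of_pos {x y : Vert B P L} (hi : i < L p) (hx : pos e0 e1 L p i x)
    (hy : pos e0 e1 L p (i + 1) y) : (pathGraph e0 e1 L).edist x y ≤ 1 := by
  by_cases hxy : x = y
  · simp [hxy]
  · have hadj : (pathGraph e0 e1 L).Adj x y := ⟨hxy, p, i, hi, Or.inl ⟨hx, hy⟩⟩
    exact (edist_eq_one_iff_adj.2 hadj).le

theorem edist_le_of_pos (hL : 0 < L p) :
    ∀ i ≤ L p, ∀ z, pos e0 e1 L p i z →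
      (pathGraph e0 e1 L).edist (Sum.inl (e0 p)) z ≤ i := by
  intro i
  induction i with
  | zero =>
    rintro - z (⟨-, rfl⟩ | ⟨h, -⟩ | ⟨-, h, -⟩)
    · simp
    · omega
    · omega
  | succ i ih =>
    intro hi z hz
    obtain ⟨z', hz'⟩ := exists_pos (by omega : i ≤ L p)
    calc (pathGraph e0 e1 L).edist (Sum.inl (e0 p)) z
        ≤ (pathGraph e0 e1 L).edist (Sum.inl (e0 p)) z' + (pathGraph e0 e1 L).edist z' z :=
          SimpleGraph.edist_triangle
      _ ≤ i + 1 := add_le_add (ih (by omega) z' hz') (edist_le_one_of_pos hi hz' hz)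
      _ = ↑(i + 1) := by push_cast; rfl

theorem pathGraph_edist_le (hL : 0 < L p) :
    (pathGraph e0 e1 L).edist (Sum.inl (e0 p)) (Sum.inl (e1 p)) ≤ L p :=
  edist_le_of_pos hL _ le_rfl _ (Or.inr (Or.inl ⟨rfl, rfl⟩))

/-- Internal vertex `k` of the path `p` is its vertex at position `k + 1`. -/
def pathExtend (L : P → ℕ) (φ : B → ℤ) (f : P → ℕ → ℤ) : Vert B P L → ℤ
  | .inl b => φ b
  | .inr ⟨p, k⟩ => f p (k + 1)

variable {φ : B → ℤ} {f : P → ℕ → ℤ}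

theorem pathExtend_of_pos (h0 : ∀ p, f p 0 = φ (e0 p)) (h1 : ∀ p, f p (L p) = φ (e1 p))
    {z : Vert B P L} (hz : pos e0 e1 L p i z) : pathExtend L φ f z = f p i := by
  rcases hz with ⟨rfl, rfl⟩ | ⟨rfl, rfl⟩ | ⟨-, hi, -, rfl⟩
  · exact (h0 p).symm
  · exact (h1 p).symm
  · exact congrArg (f p) (Nat.sub_add_cancel hi)

theorem pathExtend_le_add_one (h0 : ∀ p, f p 0 = φ (e0 p))
    (h1 : ∀ p, f p (L p) = φ (e1 p)) (hf : ∀ p i, i < L p → |f p (i + 1) - f p i| ≤ 1)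
    {x y : Vert B P L} (hxy : (pathGraph e0 e1 L).Adj x y) :
    pathExtend L φ f y ≤ pathExtend L φ f x + 1 := by
  obtain ⟨-, p, i, hi, (⟨hx, hy⟩ | ⟨hy, hx⟩)⟩ := hxy
  all_goals
    rw [pathExtend_of_pos h0 h1 hx, pathExtend_of_pos h0 h1 hy]
    have := abs_le.1 (hf p i hi)
    omega

end PathGraph

variable {a ℓ : ℕ} {U : Set (Fin ℓ → Bool)} {v : Fin ℓ → Bool}

/-- Distance from `s` to `c_left` and to `c_right`. -/
def coordDist (a : ℕ) (v : Fin ℓ → Bool) (c : Fin ℓ) : ℤ := if v c then 1 else 2 * a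

/-- Distance from `s` to `u_left^a` and to `u_right^a`. -/
def vecDist (a : ℕ) (v : Fin ℓ → Bool) (u : U) : ℤ :=
  if ∃ c, u.1 c = true ∧ v c = true then a + 1 else 3 * a

def potentialBase (a : ℕ) (v : Fin ℓ → Bool) : Base ℓ U → ℤ
  | .s => 0
  | .cL c => -coordDist a v c
  | .cR c => coordDist a v c
  | .uL0 u => -(vecDist a v u + a)
  | .uLa u => -vecDist a v u
  | .uR0 u => vecDist a v u + a
  | .uRa u => vecDist a v u

def potentialPath (a : ℕ) (v : Fin ℓ → Bool) : Pth ℓ U v → ℕ → ℤ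
  | .scL c, i => -min (i : ℤ) (coordDist a v c + 2 * a - i)
  | .scR c, i => min (i : ℤ) (coordDist a v c + 2 * a - i)
  | .uLpath u, i => -(vecDist a v u + a - i)
  | .uRpath u, i => vecDist a v u + a - i
  | .ucL u c _, i => -min (vecDist a v u + i) (coordDist a v c + a - i)
  | .ucR u c _, i => min (vecDist a v u + i) (coordDist a v c + a - i)
  | .vcL _ _, i => -min (i : ℤ) 1
  | .vcR _ _, i => min (i : ℤ) 1

def potential (a : ℕ) (v : Fin ℓ → Bool) : Vert (Base ℓ U) (Pth ℓ U v) (len a) → ℤ :=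
  pathExtend (len a) (potentialBase a v) (potentialPath a v)

theorem coordDist_bounds (ha : 0 < a) (c : Fin ℓ) :
    1 ≤ coordDist a v c ∧ coordDist a v c ≤ 2 * a := by
  unfold coordDist; split <;> omega

theorem add_one_le_vecDist (ha : 0 < a) (u : U) : a + 1 ≤ vecDist a v u := by
  unfold vecDist; split <;> omega

theorem vecDist_le_coordDist_add (ha : 0 < a) {u : U} {c : Fin ℓ} (hc : u.1 c = true) :
    vecDist a v u ≤ coordDist a v c + a := by
  unfold vecDist coordDist
  by_cases hvc : v c = true
  · simp only [hvc, if_true, if_pos (⟨c, hc, hvc⟩ : ∃ c, u.1 c = true ∧ v c = true)]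
    omega
  · simp only [hvc, Bool.false_eq_true, if_false]
    split <;> omega

theorem vecDist_of_disjoint {u : U} (hno : ∀ c, ¬(u.1 c = true ∧ v c = true)) :
    vecDist a v u = 3 * a :=
  if_neg fun ⟨c, hc⟩ => hno c hc

theorem potentialPath_zero (ha : 0 < a) (p : Pth ℓ U v) :
    potentialPath a v p 0 = potentialBase a v (e0 p) := by
  cases p with
  | scL c | scR c =>
    have := coordDist_bounds (v := v) ha c
    simp only [potentialPath, potentialBase, e0]; omega
  | ucL u c hc | ucR u c hc =>
    have := vecDist_le_coordDist_add (v := v) ha hc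
    simp only [potentialPath, potentialBase, e0]; omega
  | _ => simp [potentialPath, potentialBase, e0]

theorem potentialPath_len (ha : 0 < a) (p : Pth ℓ U v) :
    potentialPath a v p (len a p) = potentialBase a v (e1 p) := by
  cases p with
  | scL c | scR c =>
    have := coordDist_bounds (v := v) ha c
    simp only [potentialPath, potentialBase, e1, len]; omega
  | ucL u c _ | ucR u c _ =>
    have := coordDist_bounds (v := v) ha c
    have := add_one_le_vecDist (v := v) ha u
    simp only [potentialPath, potentialBase, e1, len]; omega
  | vcL c hv | vcR c hv => simp [potentialPath, potentialBase, e1, len, coordDist, hv]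
  | _ => simp only [potentialPath, potentialBase, e1, len]; omega

theorem potential_le_add_one (ha : 0 < a) (x y : Vert (Base ℓ U) (Pth ℓ U v) (len a))
    (hxy : (H a ℓ U v).Adj x y) : potential a v y ≤ potential a v x + 1 :=
  pathExtend_le_add_one (potentialPath_zero ha) (potentialPath_len ha)
    (fun p i _ => by cases p <;> simp only [potentialPath] <;> rw [abs_le] <;> omega) hxy

theorem len_pos (ha : 0 < a) (p : Pth ℓ U v) : 0 < len a p := by
  cases p <;> simp only [len] <;> omega

theorem edist_e0_e1_le (ha : 0 < a) (p : Pth ℓ U v) :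
    (H a ℓ U v).edist (Sum.inl (e0 p)) (Sum.inl (e1 p)) ≤ len a p :=
  pathGraph_edist_le (len_pos ha p)

theorem edist_s_uL0_le (ha : 0 < a) {u : U} {c : Fin ℓ} (hc : u.1 c = true) :
    (H a ℓ U v).edist (Sum.inl .s) (Sum.inl (.uL0 u)) ≤ ((4 * a : ℕ) : ℕ∞) := by
  have hs : (H a ℓ U v).edist (.inl .s) (.inl (.cL c)) ≤ (2 * a : ℕ) :=
    edist_e0_e1_le ha (.scL c)
  have hcu : (H a ℓ U v).edist (.inl (.cL c)) (.inl (.uLa u)) ≤ a :=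
    SimpleGraph.edist_comm.trans_le (edist_e0_e1_le ha (.ucL u c hc))
  have hu : (H a ℓ U v).edist (.inl (.uLa u)) (.inl (.uL0 u)) ≤ a :=
    SimpleGraph.edist_comm.trans_le (edist_e0_e1_le ha (.uLpath u))
  calc _ ≤ _ := SimpleGraph.edist_triangle
    _ ≤ _ := add_le_add hs (SimpleGraph.edist_triangle.trans (add_le_add hcu hu))
    _ = _ := by push_cast; ring

theorem edist_s_uR0_le (ha : 0 < a) {u : U} {c : Fin ℓ} (hc : u.1 c = true) :
    (H a ℓ U v).edist (Sum.inl .s) (Sum.inl (.uR0 u)) ≤ ((4 * a : ℕ) : ℕ∞) := by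
  have hs : (H a ℓ U v).edist (.inl .s) (.inl (.cR c)) ≤ (2 * a : ℕ) :=
    edist_e0_e1_le ha (.scR c)
  have hcu : (H a ℓ U v).edist (.inl (.cR c)) (.inl (.uRa u)) ≤ a :=
    SimpleGraph.edist_comm.trans_le (edist_e0_e1_le ha (.ucR u c hc))
  have hu : (H a ℓ U v).edist (.inl (.uRa u)) (.inl (.uR0 u)) ≤ a :=
    SimpleGraph.edist_comm.trans_le (edist_e0_e1_le ha (.uRpath u))
  calc _ ≤ _ := SimpleGraph.edist_triangle
    _ ≤ _ := add_le_add hs (SimpleGraph.edist_triangle.trans (add_le_add hcu hu))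
    _ = _ := by push_cast; ring

end OVConstr

open OVConstr in
theorem two_ov_graph_no_case_general
    (a ℓ : ℕ) (ha : 0 < a)
    (U : Set (Fin ℓ → Bool))
    (hUone : ∀ u ∈ U, ∃ c, u c = true) (v : Fin ℓ → Bool)
    (u : Fin ℓ → Bool) (hu : u ∈ U)
    (hno : ∀ c : Fin ℓ, ¬(u c = true ∧ v c = true)) :
    (H a ℓ U v).edist (Sum.inl Base.s) (Sum.inl (Base.uL0 ⟨u, hu⟩)) = ((4 * a : ℕ) : ℕ∞) ∧
      (H a ℓ U v).edist (Sum.inl (Base.uL0 ⟨u, hu⟩)) (Sum.inl (Base.uR0 ⟨u, hu⟩))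
        = ((8 * a : ℕ) : ℕ∞) ∧
      ((4 * a : ℕ) : ℕ∞) ≤ ecc a ℓ U v (Sum.inl Base.s) ∧
      ((8 * a : ℕ) : ℕ∞) ≤ (H a ℓ U v).ediam := by
  obtain ⟨c, hc⟩ : ∃ c, (⟨u, hu⟩ : U).1 c = true := hUone u hu
  have hvec : vecDist a v (⟨u, hu⟩ : U) = 3 * a := vecDist_of_disjoint hno
  have hsL : (H a ℓ U v).edist (Sum.inl Base.s) (Sum.inl (Base.uL0 ⟨u, hu⟩))
      = ((4 * a : ℕ) : ℕ∞) := by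
    refine le_antisymm (edist_s_uL0_le ha hc) ?_
    rw [SimpleGraph.edist_comm]
    refine SimpleGraph.natCast_le_edist_of_sub_le (potential_le_add_one ha) ?_
    simp only [potential, pathExtend, potentialBase, hvec]
    push_cast; omega
  have hLR : (H a ℓ U v).edist (Sum.inl (Base.uL0 ⟨u, hu⟩)) (Sum.inl (Base.uR0 ⟨u, hu⟩))
      = ((8 * a : ℕ) : ℕ∞) := by
    refine le_antisymm ?_ (SimpleGraph.natCast_le_edist_of_sub_le (potential_le_add_one ha) ?_)
    · calc _ ≤ _ := SimpleGraph.edist_triangle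
        _ ≤ ((4 * a : ℕ) : ℕ∞) + ((4 * a : ℕ) : ℕ∞) :=
          add_le_add (SimpleGraph.edist_comm.trans_le (edist_s_uL0_le ha hc))
            (edist_s_uR0_le ha hc)
        _ = _ := by push_cast; ring
    · simp only [potential, pathExtend, potentialBase, hvec]
      push_cast; omega
  exact ⟨hsL, hLR, hsL ▸ le_iSup (fun y => (H a ℓ U v).edist _ y) _, hLR ▸ SimpleGraph.edist_le_ediam⟩

open OVConstr in
theorem two_ov_graph_no_case
    (a ℓ : ℕ) (ha : 0 < a) (hℓ : 0 < ℓ)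
    (U : Set (Fin ℓ → Bool)) (hUfin : U.Finite) (hU : U.Nonempty)
    (hUone : ∀ u ∈ U, ∃ c, u c = true) (v : Fin ℓ → Bool)
    (u : Fin ℓ → Bool) (hu : u ∈ U)
    (hno : ∀ c : Fin ℓ, ¬(u c = true ∧ v c = true)) :
    (H a ℓ U v).edist (Sum.inl Base.s) (Sum.inl (Base.uL0 ⟨u, hu⟩)) = ((4 * a : ℕ) : ℕ∞) ∧
      (H a ℓ U v).edist (Sum.inl (Base.uL0 ⟨u, hu⟩)) (Sum.inl (Base.uR0 ⟨u, hu⟩))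
        = ((8 * a : ℕ) : ℕ∞) ∧
      ((4 * a : ℕ) : ℕ∞) ≤ ecc a ℓ U v (Sum.inl Base.s) ∧
      ((8 * a : ℕ) : ℕ∞) ≤ (H a ℓ U v).ediam :=
  two_ov_graph_no_case_general a ℓ ha U hUone v u hu hno
end
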